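/- Suppose a sequence W_t of nonnegative reals satisfies γ·c₁·‖ξ_t‖² ≤ W_t ≤ c₂·‖ξ_t‖² for all t, with constants γ, c₁, c₂ > 0, and W_{t+1} − W_t ≤ −γ̃‖ξ_t‖² + s for all t, with γ̃ > 0, γ̃ ≤ c₂, and a constant s ≥ 0. Then W_t ≤ (1 − γ̃/c₂)ᵗ · W_0 + (c₂/γ̃)·s for all t ≥ 0, and consequently ‖ξ_t‖² ≤ (c₂/(γ c₁))·(1 − γ̃/c₂)ᵗ·‖ξ_0‖² + (c₂ s)/(γ c₁ γ̃). -/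

import Mathlib

/-! The upper bound `W ≤ c₂ ‖ξ‖²` turns the decrease condition into the affine contraction
`W (t+1) ≤ (1 - γ̃/c₂) W t + s`; iterating it gives geometric decay towards the fixed point
`(c₂/γ̃) s`, and the lower bound `γ c₁ ‖ξ‖² ≤ W` transfers this to the state. -/

/-- `b / (1 - q)` is the fixed point of `x ↦ q x + b`. -/
theorem le_pow_mul_add_div_of_le_mul_add {u : ℕ → ℝ} {q b : ℝ} (hq₀ : 0 ≤ q) (hq₁ : q < 1)
    (hb : 0 ≤ b) (hu : ∀ t, u (t + 1) ≤ q * u t + b) (t : ℕ) :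
    u t ≤ q ^ t * u 0 + b / (1 - q) := by
  have hfix : q * (b / (1 - q)) + b = b / (1 - q) := by
    field_simp [(sub_pos.2 hq₁).ne']
    ring
  induction t with
  | zero => simpa using div_nonneg hb (sub_pos.2 hq₁).le
  | succ t ih =>
    calc u (t + 1) ≤ q * u t + b := hu t
      _ ≤ q * (q ^ t * u 0 + b / (1 - q)) + b := by gcongr
      _ = q ^ (t + 1) * u 0 + b / (1 - q) := by linear_combination hfix

theorem le_one_sub_div_mul_add_of_sub_le {w w' x a c s : ℝ} (ha : 0 ≤ a) (hc : 0 < c)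
    (hw : w ≤ c * x) (hdec : w' - w ≤ -a * x + s) :
    w' ≤ (1 - a / c) * w + s := by
  have hax : a / c * w ≤ a * x :=
    calc a / c * w ≤ a / c * (c * x) := by gcongr
      _ = a * x := by field_simp
  linarith

theorem iss_lyapunov_geometric_bound_general {n : ℕ}
    (W : ℕ → ℝ) (ξ : ℕ → EuclideanSpace ℝ (Fin n))
    (γ c₁ c₂ γt s : ℝ)
    (hγ : 0 < γ) (hc₁ : 0 < c₁) (hc₂ : 0 < c₂) (hγt : 0 < γt)
    (hγtc₂ : γt ≤ c₂) (hs : 0 ≤ s)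
    (hlb : ∀ t, γ * c₁ * ‖ξ t‖ ^ 2 ≤ W t)
    (hub : ∀ t, W t ≤ c₂ * ‖ξ t‖ ^ 2)
    (hdec : ∀ t, W (t + 1) - W t ≤ -γt * ‖ξ t‖ ^ 2 + s) :
    (∀ t, W t ≤ (1 - γt / c₂) ^ t * W 0 + (c₂ / γt) * s) ∧
    (∀ t, ‖ξ t‖ ^ 2 ≤ (c₂ / (γ * c₁)) * (1 - γt / c₂) ^ t * ‖ξ 0‖ ^ 2
        + (c₂ * s) / (γ * c₁ * γt)) := by
  have hq₀ : 0 ≤ 1 - γt / c₂ := sub_nonneg.2 ((div_le_one hc₂).2 hγtc₂)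
  have hq₁ : 1 - γt / c₂ < 1 := sub_lt_self _ (div_pos hγt hc₂)
  have hW : ∀ t, W t ≤ (1 - γt / c₂) ^ t * W 0 + (c₂ / γt) * s := fun t =>
    (le_pow_mul_add_div_of_le_mul_add hq₀ hq₁ hs
      (fun t => le_one_sub_div_mul_add_of_sub_le hγt.le hc₂ (hub t) (hdec t)) t).trans_eq
      (by rw [sub_sub_cancel, div_div_eq_mul_div]; ring)
  refine ⟨hW, fun t => le_of_mul_le_mul_left ?_ (mul_pos hγ hc₁)⟩
  calc γ * c₁ * ‖ξ t‖ ^ 2 ≤ W t := hlb t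
    _ ≤ (1 - γt / c₂) ^ t * (c₂ * ‖ξ 0‖ ^ 2) + c₂ / γt * s :=
      (hW t).trans (by gcongr; exact hub 0)
    _ = γ * c₁ * ((c₂ / (γ * c₁)) * (1 - γt / c₂) ^ t * ‖ξ 0‖ ^ 2
        + (c₂ * s) / (γ * c₁ * γt)) := by
      field_simp

theorem iss_lyapunov_geometric_bound {n : ℕ}
    (W : ℕ → ℝ) (ξ : ℕ → EuclideanSpace ℝ (Fin n))
    (γ c₁ c₂ γt s : ℝ)
    (hγ : 0 < γ) (hc₁ : 0 < c₁) (hc₂ : 0 < c₂) (hγt : 0 < γt)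
    (hγtc₂ : γt ≤ c₂) (hs : 0 ≤ s)
    (hWnonneg : ∀ t, 0 ≤ W t)
    (hlb : ∀ t, γ * c₁ * ‖ξ t‖ ^ 2 ≤ W t)
    (hub : ∀ t, W t ≤ c₂ * ‖ξ t‖ ^ 2)
    (hdec : ∀ t, W (t + 1) - W t ≤ -γt * ‖ξ t‖ ^ 2 + s) :
    (∀ t, W t ≤ (1 - γt / c₂) ^ t * W 0 + (c₂ / γt) * s) ∧
    (∀ t, ‖ξ t‖ ^ 2 ≤ (c₂ / (γ * c₁)) * (1 - γt / c₂) ^ t * ‖ξ 0‖ ^ 2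
        + (c₂ * s) / (γ * c₁ * γt)) :=
  iss_lyapunov_geometric_bound_general W ξ γ c₁ c₂ γt s hγ hc₁ hc₂ hγt hγtc₂ hs hlb hub hdec
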